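/- Equivalence of the simplified ∂ inference rules with σ tags for basic defeasible logic: Let D be a basic defeasible theory. Consider the extended proof system whose inference rules are ±Δ, the σ rules, and, in place of the original ±∂ rules, the simplified rules (+∂'): +∂q may be appended if +Δq ∈ P(1..i) or {+σq, −Δ~q, −σ~q} ⊆ P(1..i); and (−∂'): −∂q may be appended if −Δq ∈ P(1..i) and {−σq, +Δ~q, +σ~q} ∩ P(1..i) ≠ ∅. Then for every literal q: +∂q is provable in the original proof system iff +∂q is provable in the extended system, and −∂q is provable in the original proof system iff −∂q is provable in the extended system. -/
import Mathlib


/-- A propositional literal: an atom or its negation. -/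
inductive Lit where
  | pos : ℕ → Lit
  | neg : ℕ → Lit
deriving DecidableEq

/-- The complement ~q of a literal q. -/
def Lit.compl : Lit → Lit
  | .pos n => .neg n
  | .neg n => .pos n

/-- The atom underlying a literal. -/
def Lit.atom : Lit → ℕ
  | .pos n => n
  | .neg n => n

/-- The three kinds of rules: strict (→), defeasible (⇒), defeater (⇝). -/
inductive RuleKind where
  | strict | defeasible | defeater
deriving DecidableEq

/-- A rule: a finite body of literals, a head literal, and a kind. -/
structure Rule where
  body : Finset Lit
  head : Lit
  kind : RuleKind
deriving DecidableEq

/-- A propositional defeasible theory: finite facts, finite rules, and an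
acyclic superiority relation on rules. -/
structure DTheory where
  facts : Finset Lit
  rules : Finset Rule
  sup : Rule → Rule → Prop
  sup_acyclic : ∀ r, ¬ Relation.TransGen sup r r

/-- Tagged literals (extended conclusions): tags ±Δ, ±∂, ±σ. -/
inductive TaggedLit where
  | pDelta : Lit → TaggedLit
  | mDelta : Lit → TaggedLit
  | pPartial : Lit → TaggedLit
  | mPartial : Lit → TaggedLit
  | pSigma : Lit → TaggedLit
  | mSigma : Lit → TaggedLit
deriving DecidableEq

/-- The literal of a tagged literal. -/
def TaggedLit.lit : TaggedLit → Lit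
  | .pDelta q => q
  | .mDelta q => q
  | .pPartial q => q
  | .mPartial q => q
  | .pSigma q => q
  | .mSigma q => q

/-- Tagged literals whose tag is among +Δ, −Δ, +∂, −∂ (conclusions proper). -/
def TaggedLit.IsConclusionTag : TaggedLit → Prop
  | .pDelta _ => True
  | .mDelta _ => True
  | .pPartial _ => True
  | .mPartial _ => True
  | .pSigma _ => False
  | .mSigma _ => False

/-- R_s[q]: strict rules with head q. -/
def DTheory.Rs (D : DTheory) (q : Lit) : Set Rule :=
  {r | r ∈ D.rules ∧ r.kind = RuleKind.strict ∧ r.head = q}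

/-- R_sd[q]: strict and defeasible rules with head q. -/
def DTheory.Rsd (D : DTheory) (q : Lit) : Set Rule :=
  {r | r ∈ D.rules ∧ r.kind ≠ RuleKind.defeater ∧ r.head = q}

/-- R_d[q]: defeasible rules with head q. -/
def DTheory.Rd (D : DTheory) (q : Lit) : Set Rule :=
  {r | r ∈ D.rules ∧ r.kind = RuleKind.defeasible ∧ r.head = q}

/-- R[q]: all rules with head q. -/
def DTheory.Rall (D : DTheory) (q : Lit) : Set Rule :=
  {r | r ∈ D.rules ∧ r.head = q}

/-- The rules used for defeasible provability (tags ±∂, ±σ): under separated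
reasoning (`sep = true`) these are the defeasible rules R_d[q]; under the
standard interpretation (`sep = false`) they are R_sd[q]. -/
def DTheory.RD (D : DTheory) (sep : Bool) (q : Lit) : Set Rule :=
  if sep then D.Rd q else D.Rsd q

/-- `Step sep D S c` holds iff the tagged literal `c` may be appended to a
derivation in `D` whose set of preceding lines is `S`, by one of the inference
rules (±Δ, ±∂, ±σ).  `sep` selects separated reasoning. -/
inductive Step (sep : Bool) (D : DTheory) (S : Set TaggedLit) : TaggedLit → Prop
  | plusDelta (q : Lit) :
      (q ∈ D.facts ∨ ∃ r ∈ D.Rs q, ∀ a ∈ r.body, TaggedLit.pDelta a ∈ S) →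
      Step sep D S (TaggedLit.pDelta q)
  | minusDelta (q : Lit) :
      q ∉ D.facts →
      (∀ r ∈ D.Rs q, ∃ a ∈ r.body, TaggedLit.mDelta a ∈ S) →
      Step sep D S (TaggedLit.mDelta q)
  | plusPartial (q : Lit) :
      (TaggedLit.pDelta q ∈ S ∨
        ((∃ r ∈ D.RD sep q, ∀ a ∈ r.body, TaggedLit.pPartial a ∈ S) ∧
         TaggedLit.mDelta q.compl ∈ S ∧
         (∀ s ∈ D.Rall q.compl,
            (∃ a ∈ s.body, TaggedLit.mPartial a ∈ S) ∨
            (∃ t ∈ D.RD sep q, D.sup t s ∧ ∀ a ∈ t.body, TaggedLit.pPartial a ∈ S)))) →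
      Step sep D S (TaggedLit.pPartial q)
  | minusPartial (q : Lit) :
      TaggedLit.mDelta q ∈ S →
      ((∀ r ∈ D.RD sep q, ∃ a ∈ r.body, TaggedLit.mPartial a ∈ S) ∨
       TaggedLit.pDelta q.compl ∈ S ∨
       (∃ s ∈ D.Rall q.compl,
          (∀ a ∈ s.body, TaggedLit.pPartial a ∈ S) ∧
          (∀ t ∈ D.RD sep q,
             (∃ a ∈ t.body, TaggedLit.mPartial a ∈ S) ∨ ¬ D.sup t s))) →
      Step sep D S (TaggedLit.mPartial q)
  | plusSigma (q : Lit) :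
      (∃ r ∈ D.RD sep q, ∀ a ∈ r.body, TaggedLit.pPartial a ∈ S) →
      Step sep D S (TaggedLit.pSigma q)
  | minusSigma (q : Lit) :
      (∀ r ∈ D.RD sep q, ∃ a ∈ r.body, TaggedLit.mPartial a ∈ S) →
      Step sep D S (TaggedLit.mSigma q)

/-- Derivations: finite sequences of tagged literals, each justified by its
predecessors via the inference rules. -/
inductive IsDerivation (sep : Bool) (D : DTheory) : List TaggedLit → Prop
  | nil : IsDerivation sep D []
  | snoc (P : List TaggedLit) (c : TaggedLit) :
      IsDerivation sep D P → Step sep D {x | x ∈ P} c →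
      IsDerivation sep D (P ++ [c])

/-- D ⊢ c : the tagged literal c occurs in some derivation in D. -/
def Proves (sep : Bool) (D : DTheory) (c : TaggedLit) : Prop :=
  ∃ P, IsDerivation sep D P ∧ c ∈ P

/-- A basic defeasible theory: no defeaters and an empty superiority relation. -/
def DTheory.Basic (D : DTheory) : Prop :=
  (∀ r ∈ D.rules, r.kind ≠ RuleKind.defeater) ∧ (∀ r s : Rule, ¬ D.sup r s)

/-- D has duplicated strict rules: every strict rule has a defeasible copy. -/
def DTheory.DupStrictRules (D : DTheory) : Prop :=
  ∀ r ∈ D.rules, r.kind = RuleKind.strict →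
    Rule.mk r.body r.head RuleKind.defeasible ∈ D.rules

/-- The literals of the (finite) language of D: all literals over atoms
occurring in D. -/
def DTheory.lits (D : DTheory) : Set Lit :=
  {l | (∃ f ∈ D.facts, f.atom = l.atom) ∨
       ∃ r ∈ D.rules, r.head.atom = l.atom ∨ ∃ a ∈ r.body, a.atom = l.atom}

/-- The extended proof system: inference rules ±Δ and ±σ as before, and, in
place of the original ±∂ rules, the simplified rules
(+∂'): +∂q if +Δq ∈ P(1..i) or {+σq, −Δ~q, −σ~q} ⊆ P(1..i);
(−∂'): −∂q if −Δq ∈ P(1..i) and {−σq, +Δ~q, +σ~q} ∩ P(1..i) ≠ ∅. -/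
inductive Step2 (D : DTheory) (S : Set TaggedLit) : TaggedLit → Prop
  | plusDelta (q : Lit) :
      (q ∈ D.facts ∨ ∃ r ∈ D.Rs q, ∀ a ∈ r.body, TaggedLit.pDelta a ∈ S) →
      Step2 D S (TaggedLit.pDelta q)
  | minusDelta (q : Lit) :
      q ∉ D.facts →
      (∀ r ∈ D.Rs q, ∃ a ∈ r.body, TaggedLit.mDelta a ∈ S) →
      Step2 D S (TaggedLit.mDelta q)
  | plusSigma (q : Lit) :
      (∃ r ∈ D.Rsd q, ∀ a ∈ r.body, TaggedLit.pPartial a ∈ S) →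
      Step2 D S (TaggedLit.pSigma q)
  | minusSigma (q : Lit) :
      (∀ r ∈ D.Rsd q, ∃ a ∈ r.body, TaggedLit.mPartial a ∈ S) →
      Step2 D S (TaggedLit.mSigma q)
  | plusPartial (q : Lit) :
      (TaggedLit.pDelta q ∈ S ∨
        (TaggedLit.pSigma q ∈ S ∧ TaggedLit.mDelta q.compl ∈ S ∧
         TaggedLit.mSigma q.compl ∈ S)) →
      Step2 D S (TaggedLit.pPartial q)
  | minusPartial (q : Lit) :
      TaggedLit.mDelta q ∈ S →
      (TaggedLit.mSigma q ∈ S ∨ TaggedLit.pDelta q.compl ∈ S ∨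
       TaggedLit.pSigma q.compl ∈ S) →
      Step2 D S (TaggedLit.mPartial q)

/-- Derivations in the extended (simplified) proof system. -/
inductive IsDerivation2 (D : DTheory) : List TaggedLit → Prop
  | nil : IsDerivation2 D []
  | snoc (P : List TaggedLit) (c : TaggedLit) :
      IsDerivation2 D P → Step2 D {x | x ∈ P} c →
      IsDerivation2 D (P ++ [c])

/-- Provability in the extended (simplified) proof system. -/
def Proves2 (D : DTheory) (c : TaggedLit) : Prop :=
  ∃ P, IsDerivation2 D P ∧ c ∈ P

open TaggedLit

lemma rd_false (D : DTheory) (q : Lit) : D.RD false q = D.Rsd q := by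
  simp [DTheory.RD]

lemma rall_sub_rsd {D : DTheory} (hB : D.Basic) {q : Lit} {s : Rule}
    (hs : s ∈ D.Rall q) : s ∈ D.Rsd q :=
  ⟨hs.1, hB.1 s hs.1, hs.2⟩

lemma rsd_sub_rall {D : DTheory} {q : Lit} {s : Rule}
    (hs : s ∈ D.Rsd q) : s ∈ D.Rall q := ⟨hs.1, hs.2.2⟩

/-- σ tags in a Step2-derivation are witnessed. -/
lemma sigma_inv {D : DTheory} {P : List TaggedLit} (h : IsDerivation2 D P) :
    (∀ q, pSigma q ∈ P → ∃ r ∈ D.Rsd q, ∀ a ∈ r.body, pPartial a ∈ P) ∧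
    (∀ q, mSigma q ∈ P → ∀ r ∈ D.Rsd q, ∃ a ∈ r.body, mPartial a ∈ P) := by
  induction h with
  | nil => simp
  | snoc P c hP hs ih =>
    constructor
    · intro q hq
      rcases List.mem_append.1 hq with hq | hq
      · obtain ⟨r, hr, hb⟩ := ih.1 q hq
        exact ⟨r, hr, fun a ha => List.mem_append.2 (Or.inl (hb a ha))⟩
      · simp only [List.mem_singleton] at hq
        subst hq
        cases hs with
        | plusSigma q h =>
          obtain ⟨r, hr, hb⟩ := h
          exact ⟨r, hr, fun a ha => List.mem_append.2 (Or.inl (hb a ha))⟩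
    · intro q hq r hr
      rcases List.mem_append.1 hq with hq | hq
      · obtain ⟨a, ha, hm⟩ := ih.2 q hq r hr
        exact ⟨a, ha, List.mem_append.2 (Or.inl hm)⟩
      · simp only [List.mem_singleton] at hq
        subst hq
        cases hs with
        | minusSigma q h =>
          obtain ⟨a, ha, hm⟩ := h r hr
          exact ⟨a, ha, List.mem_append.2 (Or.inl hm)⟩

/-- Forward simulation: system 1 derivations embed into system 2. -/
lemma sim12 {D : DTheory} (hB : D.Basic) {P : List TaggedLit}
    (h : IsDerivation false D P) :
    ∃ Q, IsDerivation2 D Q ∧ ∀ x ∈ P, x ∈ Q := by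
  induction h with
  | nil => exact ⟨[], .nil, by simp⟩
  | snoc P c hP hs ih =>
    obtain ⟨Q, hQ, hsub⟩ := ih
    have hmem : ∀ x ∈ P, x ∈ Q := hsub
    have finish : ∀ {Q' : List TaggedLit}, IsDerivation2 D Q' → c ∈ Q' →
        (∀ x ∈ Q, x ∈ Q') → ∃ Q', IsDerivation2 D Q' ∧ ∀ x ∈ P ++ [c], x ∈ Q' := by
      intro Q' h1 h2 h3
      refine ⟨Q', h1, ?_⟩
      intro x hx
      rcases List.mem_append.1 hx with hx | hx
      · exact h3 x (hmem x hx)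
      · simp only [List.mem_singleton] at hx; subst hx; exact h2
    cases hs with
    | plusDelta q h =>
      refine finish (hQ.snoc _ _ (Step2.plusDelta q ?_)) (by simp) (fun x hx => by simp [hx])
      rcases h with h | ⟨r, hr, hb⟩
      · exact Or.inl h
      · exact Or.inr ⟨r, hr, fun a ha => hmem _ (hb a ha)⟩
    | minusDelta q h1 h2 =>
      refine finish (hQ.snoc _ _ (Step2.minusDelta q h1 ?_)) (by simp) (fun x hx => by simp [hx])
      intro r hr
      obtain ⟨a, ha, hm⟩ := h2 r hr
      exact ⟨a, ha, hmem _ hm⟩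
    | plusSigma q h =>
      rw [rd_false] at h
      obtain ⟨r, hr, hb⟩ := h
      refine finish (hQ.snoc _ _ (Step2.plusSigma q ⟨r, hr, fun a ha => hmem _ (hb a ha)⟩))
        (by simp) (fun x hx => by simp [hx])
    | minusSigma q h =>
      rw [rd_false] at h
      refine finish (hQ.snoc _ _ (Step2.minusSigma q ?_)) (by simp) (fun x hx => by simp [hx])
      intro r hr
      obtain ⟨a, ha, hm⟩ := h r hr
      exact ⟨a, ha, hmem _ hm⟩
    | plusPartial q h =>
      rcases h with h | ⟨⟨r, hr, hb⟩, hmd, hall⟩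
      · exact finish (hQ.snoc _ _ (Step2.plusPartial q (Or.inl (hmem _ h))))
          (by simp) (fun x hx => by simp [hx])
      · rw [rd_false] at hr
        -- append pSigma q, mSigma q.compl, pPartial q
        have s1 : IsDerivation2 D (Q ++ [pSigma q]) :=
          hQ.snoc _ _ (Step2.plusSigma q ⟨r, hr, fun a ha => hmem _ (hb a ha)⟩)
        have s2 : IsDerivation2 D (Q ++ [pSigma q] ++ [mSigma q.compl]) := by
          refine s1.snoc _ _ (Step2.minusSigma _ ?_)
          intro s hsR
          rcases hall s (rsd_sub_rall hsR) with ⟨a, ha, hm⟩ | ⟨t, _, hsup, _⟩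
          · exact ⟨a, ha, by simp [hmem _ hm]⟩
          · exact absurd hsup (hB.2 t s)
        have s3 : IsDerivation2 D (Q ++ [pSigma q] ++ [mSigma q.compl] ++ [pPartial q]) := by
          refine s2.snoc _ _ (Step2.plusPartial q (Or.inr ⟨?_, ?_, ?_⟩)) <;>
            simp [hmem _ hmd]
        exact finish s3 (by simp) (by intro x hx; simp [hx])
    | minusPartial q hmd h =>
      rcases h with h | h | ⟨s, hsR, hb, _⟩
      · rw [rd_false] at h
        have s1 : IsDerivation2 D (Q ++ [mSigma q]) := by
          refine hQ.snoc _ _ (Step2.minusSigma q ?_)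
          intro r hr
          obtain ⟨a, ha, hm⟩ := h r hr
          exact ⟨a, ha, hmem _ hm⟩
        have s2 : IsDerivation2 D (Q ++ [mSigma q] ++ [mPartial q]) := by
          refine s1.snoc _ _ (Step2.minusPartial q ?_ ?_) <;> simp [hmem _ hmd]
        exact finish s2 (by simp) (by intro x hx; simp [hx])
      · exact finish (hQ.snoc _ _ (Step2.minusPartial q (hmem _ hmd)
          (Or.inr (Or.inl (hmem _ h))))) (by simp) (fun x hx => by simp [hx])
      · have hsR' : s ∈ D.Rsd q.compl := rall_sub_rsd hB hsR
        have s1 : IsDerivation2 D (Q ++ [pSigma q.compl]) :=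
          hQ.snoc _ _ (Step2.plusSigma _ ⟨s, hsR', fun a ha => hmem _ (hb a ha)⟩)
        have s2 : IsDerivation2 D (Q ++ [pSigma q.compl] ++ [mPartial q]) := by
          refine s1.snoc _ _ (Step2.minusPartial q ?_ ?_) <;> simp [hmem _ hmd]
        exact finish s2 (by simp) (by intro x hx; simp [hx])

/-- Backward simulation: system 2 derivations embed into system 1. -/
lemma sim21 {D : DTheory} (hB : D.Basic) {P : List TaggedLit}
    (h : IsDerivation2 D P) :
    ∃ Q, IsDerivation false D Q ∧ ∀ x ∈ P, x ∈ Q := by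
  induction h with
  | nil => exact ⟨[], .nil, by simp⟩
  | snoc P c hP hs ih =>
    obtain ⟨Q, hQ, hmem⟩ := ih
    have inv := sigma_inv hP
    have finish : Step false D {x | x ∈ Q} c →
        ∃ Q', IsDerivation false D Q' ∧ ∀ x ∈ P ++ [c], x ∈ Q' := by
      intro hst
      refine ⟨Q ++ [c], hQ.snoc _ _ hst, ?_⟩
      intro x hx
      rcases List.mem_append.1 hx with hx | hx
      · simp [hmem x hx]
      · simp only [List.mem_singleton] at hx; subst hx; simp
    cases hs with
    | plusDelta q h =>
      refine finish (Step.plusDelta q ?_)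
      rcases h with h | ⟨r, hr, hb⟩
      · exact Or.inl h
      · exact Or.inr ⟨r, hr, fun a ha => hmem _ (hb a ha)⟩
    | minusDelta q h1 h2 =>
      refine finish (Step.minusDelta q h1 ?_)
      intro r hr
      obtain ⟨a, ha, hm⟩ := h2 r hr
      exact ⟨a, ha, hmem _ hm⟩
    | plusSigma q h =>
      obtain ⟨r, hr, hb⟩ := h
      refine finish (Step.plusSigma q ?_)
      rw [rd_false]
      exact ⟨r, hr, fun a ha => hmem _ (hb a ha)⟩
    | minusSigma q h =>
      refine finish (Step.minusSigma q ?_)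
      rw [rd_false]
      intro r hr
      obtain ⟨a, ha, hm⟩ := h r hr
      exact ⟨a, ha, hmem _ hm⟩
    | plusPartial q h =>
      refine finish (Step.plusPartial q ?_)
      rcases h with h | ⟨hps, hmd, hms⟩
      · exact Or.inl (hmem _ h)
      · refine Or.inr ⟨?_, hmem _ hmd, ?_⟩
        · obtain ⟨r, hr, hb⟩ := inv.1 q hps
          rw [rd_false]
          exact ⟨r, hr, fun a ha => hmem _ (hb a ha)⟩
        · intro s hsR
          obtain ⟨a, ha, hm⟩ := inv.2 q.compl hms s (rall_sub_rsd hB hsR)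
          exact Or.inl ⟨a, ha, hmem _ hm⟩
    | minusPartial q hmd h =>
      refine finish (Step.minusPartial q (hmem _ hmd) ?_)
      rcases h with h | h | h
      · refine Or.inl ?_
        rw [rd_false]
        intro r hr
        obtain ⟨a, ha, hm⟩ := inv.2 q h r hr
        exact ⟨a, ha, hmem _ hm⟩
      · exact Or.inr (Or.inl (hmem _ h))
      · obtain ⟨s, hsR, hb⟩ := inv.1 q.compl h
        refine Or.inr (Or.inr ⟨s, rsd_sub_rall hsR, fun a ha => hmem _ (hb a ha), ?_⟩)
        intro t _
        exact Or.inr (hB.2 t s)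

lemma proves_iff {D : DTheory} (hB : D.Basic) (c : TaggedLit) :
    Proves false D c ↔ Proves2 D c := by
  constructor
  · rintro ⟨P, hP, hc⟩
    obtain ⟨Q, hQ, hsub⟩ := sim12 hB hP
    exact ⟨Q, hQ, hsub c hc⟩
  · rintro ⟨P, hP, hc⟩
    obtain ⟨Q, hQ, hsub⟩ := sim21 hB hP
    exact ⟨Q, hQ, hsub c hc⟩

/-- Equivalence of the simplified ∂ inference rules with σ tags
for basic defeasible logic: for a basic defeasible theory D and every literal
q, ±∂q is provable in the original proof system iff it is provable in the
extended system. -/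
theorem simplified_partial_rules_equivalent (D : DTheory) (hBasic : D.Basic) :
    ∀ q : Lit,
      (Proves false D (TaggedLit.pPartial q) ↔ Proves2 D (TaggedLit.pPartial q)) ∧
      (Proves false D (TaggedLit.mPartial q) ↔ Proves2 D (TaggedLit.mPartial q)) := by
  intro q
  exact ⟨proves_iff hBasic _, proves_iff hBasic _⟩
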